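/- arXiv:2306.11215 — 7 statements merged into one kernel-verified Lean document; each statement's English description precedes it below -/
import Mathlib

section
/- Let z be a complex number with z ≠ 1 and z ≠ −1. If |Log((1 + z)/(1 − z))| < 1, where Log denotes the principal complex logarithm, then |z| < tan(1/2). -/
/-!
Solving `exp w = (1 + z) / (1 - z)` for `z` gives `z = tanh (w / 2)`, so it suffices to show
`‖tanh u‖ < tan r` whenever `‖u‖ < r < π / 2`. Along the ray `t ↦ tanh (t * u)` the Riccati
equation `f' = u (1 - f²)` gives `‖f'‖ ≤ ‖u‖ (1 + ‖f‖²)`, while `t ↦ tan (s * t)` solves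
`g' = s (1 + g²)` exactly; for `s > ‖u‖` the comparison principle keeps `‖f‖` below `g`.
-/

open Real

namespace Complex

theorem cosh_ne_zero_of_norm_lt {u : ℂ} (hu : ‖u‖ < π / 2) : cosh u ≠ 0 := by
  rw [← cos_mul_I, Ne, cos_eq_zero_iff]
  rintro ⟨k, hk⟩
  have hodd : (1 : ℝ) ≤ ‖2 * (k : ℂ) + 1‖ := by
    have : (1 : ℤ) ≤ |2 * k + 1| := Int.one_le_abs (by omega)
    exact_mod_cast (by simpa [← norm_intCast] using this)
  have : π / 2 ≤ ‖u‖ := by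
    have := congrArg norm hk
    rw [norm_mul, norm_I, mul_one, norm_div, norm_mul, norm_real,
      Real.norm_of_nonneg pi_pos.le, RCLike.norm_ofNat] at this
    rw [this]
    gcongr
    nlinarith [pi_pos]
  linarith

theorem hasDerivAt_tanh {u : ℂ} (h : cosh u ≠ 0) : HasDerivAt tanh (1 - tanh u ^ 2) u := by
  have hquot := (hasDerivAt_sinh u).div (hasDerivAt_cosh u) h
  rw [show sinh / cosh = tanh from funext fun w => (tanh_eq_sinh_div_cosh w).symm] at hquot
  refine hquot.congr_deriv ?_
  rw [tanh_eq_sinh_div_cosh]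
  field_simp

theorem eq_tanh_half_of_exp_eq {z w : ℂ} (hz : z ≠ 1) (hw : exp w = (1 + z) / (1 - z)) :
    z = tanh (w / 2) := by
  have hsq : exp (w / 2) ^ 2 * (1 - z) = 1 + z := by
    rw [← exp_nat_mul, show ((2 : ℕ) : ℂ) * (w / 2) = w by push_cast; ring, hw,
      div_mul_cancel₀ _ (sub_ne_zero.2 hz.symm)]
  have hmul : z * cosh (w / 2) = sinh (w / 2) := by
    rw [sinh, cosh, exp_neg]
    field_simp
    linear_combination -hsq
  have hcosh : cosh (w / 2) ≠ 0 := fun h0 => by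
    simpa [h0, ← hmul] using cosh_sq_sub_sinh_sq (w / 2)
  rw [tanh_eq_sinh_div_cosh, ← hmul, mul_div_cancel_right₀ _ hcosh]

theorem norm_tanh_le_tan {u : ℂ} {s : ℝ} (hus : ‖u‖ < s) (hs : s < π / 2) :
    ‖tanh u‖ ≤ Real.tan s := by
  have hcos : ∀ t ∈ Set.Icc (0 : ℝ) 1, Real.cos (s * t) ≠ 0 := fun t ht => by
    have hs0 : 0 ≤ s := (norm_nonneg u).trans hus.le
    refine (Real.cos_pos_of_mem_Ioo ⟨?_, ?_⟩).ne'
    · nlinarith [pi_pos, ht.1]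
    · nlinarith [ht.2]
  have hcosh : ∀ t ∈ Set.Icc (0 : ℝ) 1, cosh (t * u) ≠ 0 := fun t ht => by
    refine cosh_ne_zero_of_norm_lt ?_
    rw [norm_mul, norm_real, Real.norm_of_nonneg ht.1]
    nlinarith [ht.2, norm_nonneg u, pi_pos]
  have hf : ∀ t ∈ Set.Icc (0 : ℝ) 1,
      HasDerivAt (fun t : ℝ => tanh (t * u)) ((1 - tanh (t * u) ^ 2) * u) t := fun t ht => by
    have := (hasDerivAt_tanh (hcosh t ht)).comp (t : ℂ) ((hasDerivAt_id _).mul_const u)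
    simpa using this.comp_ofReal
  have hB : ∀ t ∈ Set.Icc (0 : ℝ) 1,
      HasDerivAt (fun t => Real.tan (s * t)) (s / Real.cos (s * t) ^ 2) t := fun t ht => by
    have := (Real.hasDerivAt_tan (hcos t ht)).comp t ((hasDerivAt_id t).const_mul s)
    simpa [Function.comp_def, div_eq_mul_inv, mul_comm] using this
  have bound : ∀ t ∈ Set.Ico (0 : ℝ) 1, ‖tanh (t * u)‖ = Real.tan (s * t) →
      ‖(1 - tanh (t * u) ^ 2) * u‖ < s / Real.cos (s * t) ^ 2 := fun t ht hfB => by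
    have hcos' := hcos t (Set.Ico_subset_Icc_self ht)
    calc ‖(1 - tanh (t * u) ^ 2) * u‖ ≤ (1 + ‖tanh (t * u)‖ ^ 2) * ‖u‖ := by
          rw [norm_mul, ← norm_pow]
          gcongr
          exact (norm_sub_le _ _).trans (by rw [norm_one])
      _ = (1 + Real.tan (s * t) ^ 2) * ‖u‖ := by rw [hfB]
      _ < (1 + Real.tan (s * t) ^ 2) * s := by gcongr
      _ = s / Real.cos (s * t) ^ 2 := by
          rw [← Real.inv_one_add_tan_sq hcos']
          field_simp
  simpa using image_norm_le_of_norm_deriv_right_lt_deriv_boundary'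
    (fun t ht => (hf t ht).continuousAt.continuousWithinAt)
    (fun t ht => (hf t (Set.Ico_subset_Icc_self ht)).hasDerivWithinAt) (by simp)
    (fun t ht => (hB t ht).continuousAt.continuousWithinAt)
    (fun t ht => (hB t (Set.Ico_subset_Icc_self ht)).hasDerivWithinAt) bound
    (Set.right_mem_Icc.2 zero_le_one)

theorem norm_tanh_lt_tan {u : ℂ} {r : ℝ} (hur : ‖u‖ < r) (hr : r < π / 2) :
    ‖tanh u‖ < Real.tan r :=
  (norm_tanh_le_tan (s := (‖u‖ + r) / 2) (by linarith) (by linarith)).trans_lt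
    (Real.tan_lt_tan_of_lt_of_lt_pi_div_two (by linarith [norm_nonneg u, pi_pos]) hr
      (by linarith))

end Complex

theorem abs_lt_tan_half_of_abs_log_lt (z : ℂ) (h1 : z ≠ 1) (h2 : z ≠ -1)
    (h : ‖Complex.log ((1 + z) / (1 - z))‖ < 1) :
    ‖z‖ < Real.tan (1/2) := by
  have hne : (1 + z) / (1 - z) ≠ 0 :=
    div_ne_zero (fun h0 => h2 (by linear_combination h0)) (sub_ne_zero.2 h1.symm)
  rw [Complex.eq_tanh_half_of_exp_eq h1 (Complex.exp_log hne)]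
  refine Complex.norm_tanh_lt_tan ?_ (by linarith [pi_gt_three])
  rw [norm_div, Complex.norm_two]
  linarith
end

section
/- For every complex number w with |w| ≤ 1, one has |tanh(w/2)| ≤ tan(1/2), where tanh(u) = (e^u − e^{−u})/(e^u + e^{−u}) is the complex hyperbolic tangent (the denominator e^u + e^{−u} is nonzero for |u| ≤ 1/2). -/
/-!
Write `w = a + b i`. Then `‖exp (w/2) ∓ exp (-(w/2))‖² = 2 (cosh a ∓ cos b)` and
`tan² (1/2) = (1 - cos 1) / (1 + cos 1)`, so the claim is equivalent to `cos 1 * cosh a ≤ cos b`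
for `a² + b² ≤ 1`. On the one hand `cos b - cos 1 = 2 sin ((1 + b)/2) sin ((1 - b)/2)` is at least
`(25/72) (1 - b²) ≥ (25/72) a²`, using `sin t ≥ t - t³/6 ≥ (5/6) t` on `[0, 1]`; on the other hand
`cosh a - 1 ≤ a² (cosh 1 - 1)` termwise in the power series. What remains is the numerical
inequality `cos 1 * (cosh 1 - 1) ≤ 25/72` (both sides are about `0.29` and `0.35`).
-/

open Real

namespace Complex

lemma norm_exp_add_exp_neg_sq (u : ℂ) :
    ‖exp u + exp (-u)‖ ^ 2 = 2 * (Real.cosh (2 * u.re) + Real.cos (2 * u.im)) := by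
  rw [Complex.sq_norm, normSq_apply]
  simp only [add_re, add_im, exp_re, exp_im, neg_re, neg_im, Real.cos_neg, Real.sin_neg]
  have hpos : rexp (2 * u.re) = rexp u.re ^ 2 := by rw [← Real.exp_nat_mul]; norm_num
  have hneg : rexp (-(2 * u.re)) = rexp (-u.re) ^ 2 := by rw [← Real.exp_nat_mul]; norm_num
  have hprod : rexp u.re * rexp (-u.re) = 1 := by rw [← Real.exp_add]; simp
  rw [Real.cosh_eq, Real.cos_two_mul, hpos, hneg]
  linear_combination (4 * Real.cos u.im ^ 2 - 2) * hprod +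
    (rexp u.re - rexp (-u.re)) ^ 2 * Real.sin_sq_add_cos_sq u.im

lemma norm_exp_sub_exp_neg_sq (u : ℂ) :
    ‖exp u - exp (-u)‖ ^ 2 = 2 * (Real.cosh (2 * u.re) - Real.cos (2 * u.im)) := by
  rw [Complex.sq_norm, normSq_apply]
  simp only [sub_re, sub_im, exp_re, exp_im, neg_re, neg_im, Real.cos_neg, Real.sin_neg]
  have hpos : rexp (2 * u.re) = rexp u.re ^ 2 := by rw [← Real.exp_nat_mul]; norm_num
  have hneg : rexp (-(2 * u.re)) = rexp (-u.re) ^ 2 := by rw [← Real.exp_nat_mul]; norm_num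
  have hprod : rexp u.re * rexp (-u.re) = 1 := by rw [← Real.exp_add]; simp
  rw [Real.cosh_eq, Real.cos_two_mul, hpos, hneg]
  linear_combination (2 - 4 * Real.cos u.im ^ 2) * hprod +
    (rexp u.re + rexp (-u.re)) ^ 2 * Real.sin_sq_add_cos_sq u.im

end Complex

namespace Real

lemma tan_half_sq_mul_one_add_cos {x : ℝ} (hx : cos (x / 2) ≠ 0) :
    tan (x / 2) ^ 2 * (1 + cos x) = 1 - cos x := by
  have hx2 : cos x = cos (2 * (x / 2)) := by ring_nf
  rw [hx2, cos_two_mul, tan_eq_sin_div_cos]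
  field_simp
  linear_combination 2 * cos (x / 2) ^ 2 * sin_sq_add_cos_sq (x / 2)

lemma cosh_le_one_add_sq_mul {a : ℝ} (ha : a ^ 2 ≤ 1) : cosh a ≤ 1 + a ^ 2 * (cosh 1 - 1) := by
  have hg : HasSum (fun n : ℕ ↦ (if n = 0 then 1 - a ^ 2 else 0) + a ^ 2 * (1 / (2 * n).factorial))
      (1 - a ^ 2 + a ^ 2 * cosh 1) :=
    (hasSum_ite_eq 0 _).add (by simpa using (hasSum_cosh 1).mul_left (a ^ 2))
  have := hasSum_le (fun n ↦ ?_) (hasSum_cosh a) hg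
  · linarith
  rcases Nat.eq_zero_or_pos n with rfl | hn
  · simp
  · have : a ^ (2 * n) ≤ a ^ 2 := by
      rw [pow_mul]
      exact pow_le_of_le_one (sq_nonneg a) ha hn.ne'
    simp only [hn.ne', if_false, zero_add, mul_one_div]
    gcongr

lemma five_sixths_mul_le_sin {t : ℝ} (h0 : 0 ≤ t) (h1 : t ≤ 1) : 5 / 6 * t ≤ sin t := by
  nlinarith [sin_ge_sub_cube h0, pow_le_one₀ h0 h1 (n := 2)]

lemma cos_one_mul_cosh_one_sub_one_le : cos 1 * (cosh 1 - 1) ≤ 25 / 72 := by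
  have hcos : cos 1 ≤ 53 / 96 := by
    have := (abs_sub_le_iff.1 (cos_bound (x := 1) (by norm_num))).1
    norm_num at this
    linarith
  have hcosh : cosh 1 - 1 ≤ 5 / 9 := by
    rw [cosh_eq]
    linarith [exp_one_lt_d9, exp_neg_one_lt_d9]
  nlinarith [cos_one_pos]

lemma cos_one_mul_cosh_le_cos {a b : ℝ} (h : a ^ 2 + b ^ 2 ≤ 1) : cos 1 * cosh a ≤ cos b := by
  wlog hb : 0 ≤ b generalizing b
  · simpa using this (b := -b) (by simpa using h) (by linarith)
  have hb1 : b ≤ 1 := by nlinarith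
  have hcos : 25 / 72 * (1 - b ^ 2) ≤ cos b - cos 1 := by
    have hsum := five_sixths_mul_le_sin (t := (b + 1) / 2) (by linarith) (by linarith)
    have hdiff := five_sixths_mul_le_sin (t := (1 - b) / 2) (by linarith) (by linarith)
    have hprod : cos b - cos 1 = 2 * sin ((b + 1) / 2) * sin ((1 - b) / 2) := by
      rw [cos_sub_cos, ← neg_sub 1 b, neg_div, sin_neg]; ring
    rw [hprod]
    nlinarith [mul_le_mul hsum hdiff (by linarith) (by linarith)]
  have hcosh := cosh_le_one_add_sq_mul (a := a) (by nlinarith)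
  nlinarith [cos_one_pos, cos_one_mul_cosh_one_sub_one_le]

end Real

theorem abs_tanh_half_le (w : ℂ) (hw : ‖w‖ ≤ 1) :
    ‖(Complex.exp (w/2) - Complex.exp (-(w/2))) /
      (Complex.exp (w/2) + Complex.exp (-(w/2)))‖ ≤ Real.tan (1/2) := by
  have hre : 2 * (w / 2).re = w.re := by simp; ring
  have him : 2 * (w / 2).im = w.im := by simp; ring
  have hsub := Complex.norm_exp_sub_exp_neg_sq (w / 2)
  have hadd := Complex.norm_exp_add_exp_neg_sq (w / 2)
  rw [hre, him] at hsub hadd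
  have hkey : cos 1 * cosh w.re ≤ cos w.im := cos_one_mul_cosh_le_cos
    (by nlinarith [Complex.sq_norm w, Complex.normSq_apply w, norm_nonneg w])
  have hcos_half : 0 < cos (1 / 2) :=
    cos_pos_of_mem_Ioo ⟨by linarith [pi_pos], by linarith [pi_gt_three]⟩
  have htan_sq := tan_half_sq_mul_one_add_cos (x := 1) hcos_half.ne'
  have htan_nonneg : 0 ≤ tan (1 / 2) :=
    (tan_pos_of_pos_of_lt_pi_div_two (by norm_num) (by linarith [pi_gt_three])).le
  rw [norm_div]
  refine div_le_of_le_mul₀ (norm_nonneg _) htan_nonneg ?_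
  rw [← pow_le_pow_iff_left₀ (norm_nonneg _) (by positivity) two_ne_zero, mul_pow, hsub, hadd]
  -- multiplied by `1 + cos 1 > 0`, the goal becomes `hkey` by `htan_sq`
  nlinarith [cos_one_pos]
end

section
/- Let −1 < D < C ≤ 1 and let α₁, α₂ > 0 be real numbers with (α₁ − α₂)(1 − D²) ≥ e(C − D)(1 + |D|). Let p : ℂ → ℂ be analytic on the open unit disk 𝔻 with p(0) = 1, and suppose that for every z ∈ 𝔻 the value 1 + α₁·z·p'(z) + α₂·z²·p''(z) lies in the open disk {w ∈ ℂ : |w − (1−CD)/(1−D²)| < (C−D)/(1−D²)}. Then for every z ∈ 𝔻, |Log(p(z))| < 1, where Log is the principal complex logarithm; i.e., p is subordinate to e^z. -/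
/-!
Put `G z = α₁ p'(z) + α₂ z p''(z)`. The Janowski disk lies in the disk of radius
`M = (C - D)(1 + |D|) / (1 - D²)` about `1`, so `z G(z)` maps `𝔻` into the disk of radius `M`
about `0`, and the Schwarz lemma gives `|G| ≤ M`. With `κ = α₁ / α₂ > 1`, the function
`t ↦ t^κ p'(t z)` on `[0, 1]` has derivative `t^(κ-1) G(t z) / α₂`, whose norm is at most the
derivative of `M t^κ / α₁`; the comparison principle yields `|p'| ≤ M / α₁`. The hypothesis
on `α₁ - α₂` makes this at most `1 / 2`, so `|p - 1| ≤ 1 / 2` on `𝔻` and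
`|Log p| ≤ 3/2 |p - 1| < 1`.
-/

open Metric Set

theorem Complex.norm_log_lt_one_of_norm_sub_one_le_half {z : ℂ} (h : ‖z - 1‖ ≤ 1 / 2) :
    ‖log z‖ < 1 := by
  have := norm_log_one_add_half_le_self h
  rw [add_sub_cancel] at this
  linarith

theorem norm_sub_one_lt_of_mem_janowski_disk {C D : ℝ} (hD : |D| < 1) (hDC : D < C) {w : ℂ}
    (hw : ‖w - ((1 - C * D) / (1 - D ^ 2) : ℝ)‖ < (C - D) / (1 - D ^ 2)) :
    ‖w - 1‖ < (C - D) * (1 + |D|) / (1 - D ^ 2) := by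
  set c : ℝ := (1 - C * D) / (1 - D ^ 2)
  have hD2 : 0 < 1 - D ^ 2 := by nlinarith [sq_abs D, abs_nonneg D]
  have hc : ‖(c : ℂ) - 1‖ = |D| * (C - D) / (1 - D ^ 2) := by
    rw [← Complex.ofReal_one, ← Complex.ofReal_sub, Complex.norm_real, Real.norm_eq_abs,
      show c - 1 = -(D * (C - D)) / (1 - D ^ 2) by rw [div_sub_one hD2.ne']; ring,
      abs_div, abs_neg, abs_mul, abs_of_pos (sub_pos.2 hDC), abs_of_pos hD2]
  calc ‖w - 1‖ ≤ ‖w - c‖ + ‖(c : ℂ) - 1‖ := norm_sub_le_norm_sub_add_norm_sub w c 1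
    _ < (C - D) / (1 - D ^ 2) + |D| * (C - D) / (1 - D ^ 2) := by rw [hc]; gcongr
    _ = (C - D) * (1 + |D|) / (1 - D ^ 2) := by ring

theorem norm_le_div_of_norm_smul_le {E : Type*} [NormedAddCommGroup E] [NormedSpace ℂ E]
    {G : ℂ → E} {R M : ℝ} (hG : DifferentiableOn ℂ G (ball 0 R))
    (hM : ∀ z ∈ ball 0 R, ‖z • G z‖ ≤ M) {z : ℂ} (hz : z ∈ ball 0 R) :
    ‖G z‖ ≤ M / R := by
  have hdslope : dslope (fun w ↦ w • G w) 0 z = G z := by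
    rcases eq_or_ne z 0 with rfl | hz0
    · have hR : 0 < R := by simpa using hz
      have hG0 := (hG.differentiableAt (ball_mem_nhds 0 hR)).hasDerivAt
      simpa using ((hasDerivAt_id' (0 : ℂ)).fun_smul hG0).deriv
    · simpa using dslope_sub_smul_of_ne G (a := 0) hz0
  rw [← hdslope]
  refine Complex.norm_dslope_le_div_of_mapsTo_ball (differentiableOn_id.smul hG)
    (fun w hw ↦ ?_) hz
  simpa using hM w hw

theorem hasDerivAt_rpow_mul_comp_ofReal_mul {f : ℂ → ℂ} {f' w : ℂ} {κ t : ℝ} (hκ : 1 ≤ κ)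
    (ht : 0 ≤ t) (hf : HasDerivAt f f' (t * w)) :
    HasDerivAt (fun s : ℝ ↦ (s ^ κ : ℝ) * f (s * w))
      ((t ^ (κ - 1) : ℝ) * (κ * f (t * w) + t * w * f')) t := by
  have hcomp : HasDerivAt (fun s : ℝ ↦ f (s * w)) (f' * w) t :=
    (hf.comp (t : ℂ) ((hasDerivAt_id (t : ℂ)).mul_const w)).comp_ofReal.congr_deriv (by simp)
  have hpow := (Real.hasDerivAt_rpow_const (x := t) (Or.inr hκ)).ofReal_comp
  refine (hpow.fun_mul hcomp).congr_deriv ?_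
  have hsplit : t ^ κ = t ^ (κ - 1) * t := by
    conv_lhs => rw [← sub_add_cancel κ 1]
    rw [Real.rpow_add' ht (by linarith), Real.rpow_one]
  rw [hsplit]
  push_cast
  ring

theorem norm_le_div_of_norm_mul_add_mul_deriv_le {f : ℂ → ℂ} {s : Set ℂ} {a b M : ℝ}
    (hs : StarConvex ℝ 0 s) (hs_open : IsOpen s) (hf : DifferentiableOn ℂ f s)
    (hb : 0 < b) (hba : b < a) (hM : ∀ z ∈ s, ‖a * f z + b * z * deriv f z‖ ≤ M)
    {w : ℂ} (hw : w ∈ s) : ‖f w‖ ≤ M / a := by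
  set κ := a / b
  have hκ : 1 < κ := (one_lt_div hb).2 hba
  have hmem : ∀ t ∈ Icc (0 : ℝ) 1, (t : ℂ) * w ∈ s := fun t ht ↦ by
    simpa [Complex.real_smul] using hs.smul_mem hw ht.1 ht.2
  set ψ' : ℝ → ℂ := fun t ↦
    (t ^ (κ - 1) : ℝ) * (κ * f (t * w) + t * w * deriv f (t * w))
  -- As `κ > 1`, `t ↦ t ^ κ f (t w)` is differentiable at `t = 0` too: no limit `t → 0` is needed.
  have hψ : ∀ t ∈ Icc (0 : ℝ) 1,
      HasDerivAt (fun t : ℝ ↦ (t ^ κ : ℝ) * f (t * w)) (ψ' t) t := fun t ht ↦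
    hasDerivAt_rpow_mul_comp_ofReal_mul hκ.le ht.1
      (hf.differentiableAt (hs_open.mem_nhds (hmem t ht))).hasDerivAt
  have hbound : ∀ t ∈ Ico (0 : ℝ) 1, ‖ψ' t‖ ≤ M / a * (κ * t ^ (κ - 1)) := by
    intro t ht
    have hκf : (κ : ℂ) * f (t * w) + t * w * deriv f (t * w)
        = (a * f (t * w) + b * (t * w) * deriv f (t * w)) / b := by
      have hb' : (b : ℂ) ≠ 0 := by exact_mod_cast hb.ne'
      simp only [κ]; push_cast; field_simp
    calc ‖ψ' t‖ = t ^ (κ - 1) / b * ‖a * f (t * w) + b * (t * w) * deriv f (t * w)‖ := by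
          simp only [ψ', hκf, norm_mul, norm_div, Complex.norm_real,
            Real.norm_of_nonneg (Real.rpow_nonneg ht.1 _), Real.norm_of_nonneg hb.le]
          ring
      _ ≤ t ^ (κ - 1) / b * M :=
          mul_le_mul_of_nonneg_left (hM _ (hmem t (Ico_subset_Icc_self ht)))
            (div_nonneg (Real.rpow_nonneg ht.1 _) hb.le)
      _ = M / a * (κ * t ^ (κ - 1)) := by
          have ha : a ≠ 0 := (hb.trans hba).ne'
          simp only [κ]; field_simp
  have hB : ∀ t, HasDerivAt (fun t ↦ M / a * t ^ κ) (M / a * (κ * t ^ (κ - 1))) t := fun t ↦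
    (Real.hasDerivAt_rpow_const (Or.inr hκ.le)).const_mul _
  have := image_norm_le_of_norm_deriv_right_le_deriv_boundary
    (fun t ht ↦ (hψ t ht).continuousAt.continuousWithinAt)
    (fun t ht ↦ (hψ t (Ico_subset_Icc_self ht)).hasDerivWithinAt)
    (by simp [Real.zero_rpow (by linarith : κ ≠ 0)]) hB hbound (right_mem_Icc.2 zero_le_one)
  simpa using this

theorem norm_mul_deriv_add_le_of_mem_janowski_disk {C D α₁ α₂ : ℝ} {p : ℂ → ℂ}
    (hD : |D| < 1) (hDC : D < C) (hp : DifferentiableOn ℂ p (ball 0 1))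
    (hsub : ∀ z ∈ ball (0 : ℂ) 1,
      ‖1 + α₁ * z * deriv p z + α₂ * z ^ 2 * deriv (deriv p) z
        - ((1 - C * D) / (1 - D ^ 2) : ℝ)‖ < (C - D) / (1 - D ^ 2))
    {w : ℂ} (hw : w ∈ ball (0 : ℂ) 1) :
    ‖α₁ * deriv p w + α₂ * w * deriv (deriv p) w‖ ≤ (C - D) * (1 + |D|) / (1 - D ^ 2) := by
  refine (norm_le_div_of_norm_smul_le
    (G := fun w ↦ α₁ * deriv p w + α₂ * w * deriv (deriv p) w) ?_ (fun v hv ↦ ?_) hw).trans_eq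
    (div_one _)
  · have hp' := hp.deriv isOpen_ball
    have hp'' := hp'.deriv isOpen_ball
    fun_prop
  · refine (norm_sub_one_lt_of_mem_janowski_disk hD hDC (hsub v hv)).le.trans_eq' ?_
    congr 1
    simp only [smul_eq_mul]
    ring

theorem subordination_janowski_general (C D α₁ α₂ : ℝ) (hD : -1 < D) (hDC : D < C) (hC : C ≤ 1)
    (h₂ : 0 < α₂)
    (hcond : (α₁ - α₂) * (1 - D^2) ≥ Real.exp 1 * (C - D) * (1 + |D|))
    (p : ℂ → ℂ) (hp : DifferentiableOn ℂ p (Metric.ball (0:ℂ) 1)) (hp0 : p 0 = 1)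
    (hsub : ∀ z ∈ Metric.ball (0:ℂ) 1,
      ‖1 + α₁ * z * deriv p z + α₂ * z^2 * deriv (deriv p) z
        - ((1 - C*D)/(1 - D^2) : ℝ)‖ < (C - D)/(1 - D^2)) :
    ∀ z ∈ Metric.ball (0:ℂ) 1, ‖Complex.log (p z)‖ < 1 := by
  intro z hz
  have hD1 : |D| < 1 := abs_lt.2 ⟨hD, hDC.trans_le hC⟩
  have hD2 : 0 < 1 - D ^ 2 := by nlinarith [sq_abs D, abs_nonneg D]
  set M := (C - D) * (1 + |D|) / (1 - D ^ 2)
  have hM : 0 < M := by have := sub_pos.2 hDC; positivity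
  have hMα : 2 * M ≤ α₁ - α₂ :=
    calc 2 * M ≤ Real.exp 1 * M := by gcongr; linarith [Real.add_one_le_exp 1]
      _ ≤ α₁ - α₂ := by rw [← mul_div_assoc, div_le_iff₀ hD2, ← mul_assoc]; exact hcond
  have hp' : ∀ w ∈ ball (0 : ℂ) 1, ‖deriv p w‖ ≤ 1 / 2 := fun w hw ↦
    (norm_le_div_of_norm_mul_add_mul_deriv_le ((convex_ball 0 1).starConvex (mem_ball_self one_pos))
      isOpen_ball (hp.deriv isOpen_ball) h₂ (by linarith)
      (fun v hv ↦ norm_mul_deriv_add_le_of_mem_janowski_disk hD1 hDC hp hsub hv) hw).trans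
      (by rw [div_le_div_iff₀ (by linarith) two_pos]; linarith)
  have hpz : ‖p z - 1‖ ≤ 1 / 2 := by
    have := (convex_ball (0 : ℂ) 1).norm_image_sub_le_of_norm_deriv_le
      (fun w hw ↦ hp.differentiableAt (isOpen_ball.mem_nhds hw)) hp' (mem_ball_self one_pos) hz
    rw [hp0, sub_zero] at this
    exact this.trans (mul_le_of_le_one_right (by norm_num) (mem_ball_zero_iff.1 hz).le)
  exact Complex.norm_log_lt_one_of_norm_sub_one_le_half hpz

theorem subordination_janowski (C D α₁ α₂ : ℝ) (hD : -1 < D) (hDC : D < C) (hC : C ≤ 1)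
    (h₁ : 0 < α₁) (h₂ : 0 < α₂)
    (hcond : (α₁ - α₂) * (1 - D^2) ≥ Real.exp 1 * (C - D) * (1 + |D|))
    (p : ℂ → ℂ) (hp : DifferentiableOn ℂ p (Metric.ball (0:ℂ) 1)) (hp0 : p 0 = 1)
    (hsub : ∀ z ∈ Metric.ball (0:ℂ) 1,
      ‖1 + α₁ * z * deriv p z + α₂ * z^2 * deriv (deriv p) z
        - ((1 - C*D)/(1 - D^2) : ℝ)‖ < (C - D)/(1 - D^2)) :
    ∀ z ∈ Metric.ball (0:ℂ) 1, ‖Complex.log (p z)‖ < 1 :=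
  subordination_janowski_general C D α₁ α₂ hD hDC hC h₂ hcond p hp hp0 hsub
end

section
/- Let α₁, α₂ > 0 be real numbers with α₁ − α₂ ≥ e(e − 1). Let p : ℂ → ℂ be analytic on the open unit disk 𝔻 with p(0) = 1, and suppose that for every z ∈ 𝔻 one has |Log(1 + α₁·z·p'(z) + α₂·z²·p''(z))| < 1, where Log is the principal complex logarithm. Then for every z ∈ 𝔻, |Log(p(z))| < 1. -/
open Complex Metric Set Filter
open scoped Topology

/-!
Put `g w = α₁ w p'(w) + α₂ w² p''(w)`. From `‖Log (1 + g)‖ < 1` we get `‖g‖ < 2`, and since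
`g 0 = 0` Schwarz's lemma gives `‖g w‖ ≤ 2 ‖w‖`. The function `q w = w p'(w)` solves the
first-order equation `α₂ w q' + (α₁ - α₂) q = g`; integrating it along rays with the factor
`t ^ (α₁ / α₂ - 1)` gives `‖q w‖ ≤ 2 ‖w‖ / α₁`, and integrating `p'` along rays then gives
`‖p z - 1‖ ≤ 2 ‖z‖ / α₁ ≤ 1 / 2` because `α₁ > 4`. Finally `‖Log (1 + u)‖ ≤ 3/2 ‖u‖`
for `‖u‖ ≤ 1/2`.
-/

theorem norm_le_div_of_norm_smul_add_smul_deriv_le {E : Type*} [NormedAddCommGroup E]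
    [NormedSpace ℝ E] {φ φ' : ℝ → E} {c K : ℝ} (hc : 0 ≤ c)
    (hφ : ContinuousOn φ (Icc 0 1)) (hφ0 : φ 0 = 0)
    (hderiv : ∀ t ∈ Ioo (0 : ℝ) 1, HasDerivAt φ (φ' t) t)
    (hbound : ∀ t ∈ Ioo (0 : ℝ) 1, ‖c • φ t + t • φ' t‖ ≤ K * t) :
    ‖φ 1‖ ≤ K / (c + 1) := by
  have hK : 0 ≤ K := by
    have := (norm_nonneg _).trans (hbound (1 / 2) ⟨by norm_num, by norm_num⟩)
    linarith
  -- `F` is not differentiable at `0` when `c < 1`, so we compare with `K t ^ (c + 1) / (c + 1)`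
  -- on `[ε, 1]` and let `ε → 0`.
  set F : ℝ → E := fun t => t ^ c • φ t
  have hF : ContinuousOn F (Icc 0 1) := (Real.continuous_rpow_const hc).continuousOn.smul hφ
  have hF' : ∀ t ∈ Ioo (0 : ℝ) 1, HasDerivAt F (t ^ (c - 1) • (c • φ t + t • φ' t)) t := by
    intro t ht
    refine ((Real.hasDerivAt_rpow_const (p := c) (Or.inl ht.1.ne')).smul
      (hderiv t ht)).congr_deriv ?_
    rw [smul_add, smul_smul, smul_smul, ← Real.rpow_add_one ht.1.ne', sub_add_cancel, mul_comm,
      add_comm]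
  have hB : ∀ t : ℝ, HasDerivAt (fun s => K * s ^ (c + 1) / (c + 1)) (K * t ^ c) t := by
    intro t
    refine (((Real.hasDerivAt_rpow_const (p := c + 1) (Or.inr (by linarith))).const_mul
      K).div_const (c + 1)).congr_deriv ?_
    rw [add_sub_cancel_right]
    field_simp
  have hF'_le : ∀ t ∈ Ioo (0 : ℝ) 1, ‖t ^ (c - 1) • (c • φ t + t • φ' t)‖ ≤ K * t ^ c := by
    intro t ht
    have hpos : 0 ≤ t ^ (c - 1) := Real.rpow_nonneg ht.1.le _
    calc ‖t ^ (c - 1) • (c • φ t + t • φ' t)‖ ≤ t ^ (c - 1) * (K * t) := by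
          rw [norm_smul, Real.norm_of_nonneg hpos]
          exact mul_le_mul_of_nonneg_left (hbound t ht) hpos
      _ = K * t ^ c := by
          rw [mul_left_comm, ← Real.rpow_add_one ht.1.ne', sub_add_cancel]
  have hsub : ∀ ε ∈ Ioo (0 : ℝ) 1, ‖F 1 - F ε‖ ≤ K / (c + 1) := by
    intro ε hε
    have := image_norm_le_of_norm_deriv_right_le_deriv_boundary (f := fun t => F t - F ε)
      ((hF.mono (Icc_subset_Icc_left hε.1.le)).sub continuousOn_const)
      (fun t ht => ((hF' t ⟨hε.1.trans_le ht.1, ht.2⟩).sub_const _).hasDerivWithinAt)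
      (by
        rw [sub_self, norm_zero]
        exact div_nonneg (mul_nonneg hK (Real.rpow_nonneg hε.1.le _)) (by linarith)) hB
      (fun t ht => hF'_le t ⟨hε.1.trans_le ht.1, ht.2⟩) ⟨hε.2.le, le_rfl⟩
    simpa using this
  have hlim : Tendsto (fun ε => ‖F 1 - F ε‖) (𝓝[>] 0) (𝓝 ‖F 1 - F 0‖) :=
    (((hF 0 ⟨le_rfl, zero_le_one⟩).mono_of_mem_nhdsWithin (Icc_mem_nhdsGE zero_lt_one)).mono
      Ioi_subset_Ici_self).const_sub (F 1) |>.norm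
  have := le_of_tendsto hlim (eventually_of_mem (Ioo_mem_nhdsGT zero_lt_one) hsub)
  simpa [F, hφ0] using this

theorem norm_le_div_of_norm_mul_add_mul_deriv_le_s14 {f : ℂ → ℂ} {c M : ℝ} (hc : 0 ≤ c)
    (hf : DifferentiableOn ℂ f (ball 0 1)) (hf0 : f 0 = 0)
    (hbound : ∀ w ∈ ball (0 : ℂ) 1, ‖c * f w + w * deriv f w‖ ≤ M * ‖w‖)
    {z : ℂ} (hz : z ∈ ball (0 : ℂ) 1) : ‖f z‖ ≤ M * ‖z‖ / (c + 1) := by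
  have hray : ∀ t ∈ Icc (0 : ℝ) 1, (t : ℂ) * z ∈ ball (0 : ℂ) 1 := fun t ht => by
    simpa [Complex.real_smul] using (convex_ball (0 : ℂ) 1).smul_mem_of_zero_mem
      (mem_ball_self one_pos) hz ht
  have hray' : ∀ t ∈ Ioo (0 : ℝ) 1, (t : ℂ) * z ∈ ball (0 : ℂ) 1 :=
    fun t ht => hray t (Ioo_subset_Icc_self ht)
  have := norm_le_div_of_norm_smul_add_smul_deriv_le (φ := fun t : ℝ => f (t * z))
    (φ' := fun t => deriv f (t * z) * z) (K := M * ‖z‖) hc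
    (hf.continuousOn.comp (by fun_prop) hray) (by simpa using hf0)
    (fun t ht => ((hf.differentiableAt (isOpen_ball.mem_nhds (hray' t ht))).hasDerivAt.comp
      (t : ℂ) (hasDerivAt_mul_const z)).comp_ofReal)
    (fun t ht => by
      have h := hbound _ (hray' t ht)
      rw [norm_mul, Complex.norm_real, Real.norm_of_nonneg ht.1.le] at h
      calc _ = ‖c * f (t * z) + t * z * deriv f (t * z)‖ := by
            simp only [Complex.real_smul]; ring_nf
        _ ≤ M * (t * ‖z‖) := h
        _ = M * ‖z‖ * t := by ring)
  simpa using this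

theorem norm_sub_le_of_norm_secondOrder_le {α₁ α₂ M : ℝ} (h₂ : 0 < α₂) (h₂₁ : α₂ ≤ α₁)
    {p : ℂ → ℂ} (hp : DifferentiableOn ℂ p (ball 0 1))
    (hbound : ∀ w ∈ ball (0 : ℂ) 1,
      ‖α₁ * w * deriv p w + α₂ * w ^ 2 * deriv (deriv p) w‖ ≤ M * ‖w‖)
    {z : ℂ} (hz : z ∈ ball (0 : ℂ) 1) : ‖p z - p 0‖ ≤ M * ‖z‖ / α₁ := by
  have h₁ : 0 < α₁ := h₂.trans_le h₂₁
  have hp' : DifferentiableOn ℂ (deriv p) (ball 0 1) :=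
    (hp.analyticOnNhd isOpen_ball).deriv.differentiableOn
  have hq : ∀ w ∈ ball (0 : ℂ) 1, ‖w * deriv p w‖ ≤ M / α₁ * ‖w‖ := by
    intro w hw
    have := norm_le_div_of_norm_mul_add_mul_deriv_le_s14 (f := fun w => w * deriv p w)
      (c := α₁ / α₂ - 1) (M := M / α₂) (sub_nonneg.2 ((one_le_div h₂).2 h₂₁))
      (differentiableOn_id.mul hp') (by simp) ?_ hw
    · exact this.trans_eq (by rw [sub_add_cancel]; field_simp)
    · intro u hu
      have hderiv : deriv (fun w => w * deriv p w) u = deriv p u + u * deriv (deriv p) u := by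
        have := (hasDerivAt_id' u).fun_mul
          (hp'.differentiableAt (isOpen_ball.mem_nhds hu)).hasDerivAt
        simpa using this.deriv
      have hα₂ : (α₂ : ℂ) ≠ 0 := by exact_mod_cast h₂.ne'
      have hrewrite : ((α₁ / α₂ - 1 : ℝ) : ℂ) * (u * deriv p u) +
          u * (deriv p u + u * deriv (deriv p) u) =
          (α₁ * u * deriv p u + α₂ * u ^ 2 * deriv (deriv p) u) / α₂ := by
        push_cast
        field_simp
        ring
      rw [hderiv, hrewrite, norm_div, Complex.norm_real, Real.norm_of_nonneg h₂.le, div_le_iff₀ h₂]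
      exact (hbound u hu).trans_eq (by field_simp)
  have := norm_le_div_of_norm_mul_add_mul_deriv_le_s14 (f := fun w => p w - p 0) (c := 0)
    (M := M / α₁) le_rfl (hp.sub_const _) (sub_self _) (fun w hw => by simpa using hq w hw) hz
  exact (by simpa using this : ‖p z - p 0‖ ≤ M / α₁ * ‖z‖).trans_eq (by ring)

theorem norm_lt_two_of_norm_log_one_add_lt_one {x : ℂ} (h : ‖log (1 + x)‖ < 1) : ‖x‖ < 2 := by
  rcases eq_or_ne (1 + x) 0 with hx | hx
  · rw [eq_neg_of_add_eq_zero_right hx]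
    norm_num
  · calc ‖x‖ = ‖exp (log (1 + x)) - 1‖ := by rw [exp_log hx, add_sub_cancel_left]
      _ ≤ 2 * ‖log (1 + x)‖ := norm_exp_sub_one_le h.le
      _ < 2 := by linarith

theorem norm_le_two_mul_norm_of_norm_log_one_add_lt_one {g : ℂ → ℂ}
    (hg : DifferentiableOn ℂ g (ball 0 1)) (hg0 : g 0 = 0)
    (hlog : ∀ w ∈ ball (0 : ℂ) 1, ‖log (1 + g w)‖ < 1) {w : ℂ} (hw : w ∈ ball (0 : ℂ) 1) :
    ‖g w‖ ≤ 2 * ‖w‖ := by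
  have hmaps : MapsTo g (ball 0 1) (closedBall (g 0) 2) := fun u hu => by
    simpa [hg0] using (norm_lt_two_of_norm_log_one_add_lt_one (hlog u hu)).le
  simpa [hg0] using Complex.dist_le_div_mul_dist_of_mapsTo_ball hg hmaps hw

theorem subordination_exp_general (α₁ α₂ : ℝ) (h₂ : 0 < α₂)
    (hcond : α₁ - α₂ ≥ Real.exp 1 * (Real.exp 1 - 1))
    (p : ℂ → ℂ) (hp : DifferentiableOn ℂ p (Metric.ball (0:ℂ) 1)) (hp0 : p 0 = 1)
    (hsub : ∀ z ∈ Metric.ball (0:ℂ) 1,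
      ‖Complex.log (1 + α₁ * z * deriv p z + α₂ * z^2 * deriv (deriv p) z)‖ < 1) :
    ∀ z ∈ Metric.ball (0:ℂ) 1, ‖Complex.log (p z)‖ < 1 := by
  have h₄ : 4 ≤ α₁ - α₂ := le_trans (by nlinarith [Real.exp_one_gt_d9]) hcond
  have hp' : DifferentiableOn ℂ (deriv p) (ball 0 1) :=
    (hp.analyticOnNhd isOpen_ball).deriv.differentiableOn
  have hp'' : DifferentiableOn ℂ (deriv (deriv p)) (ball 0 1) :=
    (hp'.analyticOnNhd isOpen_ball).deriv.differentiableOn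
  have hschwarz : ∀ w ∈ ball (0 : ℂ) 1,
      ‖α₁ * w * deriv p w + α₂ * w ^ 2 * deriv (deriv p) w‖ ≤ 2 * ‖w‖ :=
    fun w hw => norm_le_two_mul_norm_of_norm_log_one_add_lt_one
      (g := fun w => α₁ * w * deriv p w + α₂ * w ^ 2 * deriv (deriv p) w) (by fun_prop) (by simp)
      (fun u hu => by simpa only [add_assoc] using hsub u hu) hw
  intro z hz
  have hpz : ‖p z - 1‖ ≤ 1 / 2 := by
    have := norm_sub_le_of_norm_secondOrder_le h₂ (by linarith) hp hschwarz hz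
    rw [hp0] at this
    refine this.trans ?_
    rw [div_le_iff₀ (by linarith)]
    linarith [mem_ball_zero_iff.1 hz]
  calc ‖log (p z)‖ = ‖log (1 + (p z - 1))‖ := by rw [add_sub_cancel]
    _ ≤ 3 / 2 * ‖p z - 1‖ := norm_log_one_add_half_le_self hpz
    _ < 1 := by linarith

theorem subordination_exp (α₁ α₂ : ℝ) (h₁ : 0 < α₁) (h₂ : 0 < α₂)
    (hcond : α₁ - α₂ ≥ Real.exp 1 * (Real.exp 1 - 1))
    (p : ℂ → ℂ) (hp : DifferentiableOn ℂ p (Metric.ball (0:ℂ) 1)) (hp0 : p 0 = 1)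
    (hsub : ∀ z ∈ Metric.ball (0:ℂ) 1,
      ‖Complex.log (1 + α₁ * z * deriv p z + α₂ * z^2 * deriv (deriv p) z)‖ < 1) :
    ∀ z ∈ Metric.ball (0:ℂ) 1, ‖Complex.log (p z)‖ < 1 :=
  subordination_exp_general α₁ α₂ h₂ hcond p hp hp0 hsub
end

section
/- Let α₁, α₂ > 0 be real numbers with α₁ − α₂ ≥ e·tan(1/2). Let p : ℂ → ℂ be analytic on the open unit disk 𝔻 with p(0) = 1, and suppose that for every z ∈ 𝔻 the value w(z) = 1 + α₁·z·p'(z) + α₂·z²·p''(z) satisfies w(z) ≠ 2 and |Log(w(z)/(2 − w(z)))| < 1. Then for every z ∈ 𝔻, |Log(p(z))| < 1. -/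
/-!
Write `W = 1 + α₁ z p' + α₂ z² p'' = 1 + z G(z)` with `G = α₁ p' + α₂ z p''`. Where `W ≠ 0`, the
hypothesis says `W = 2 / (1 + e^{-u})` with `|u| < 1`, so `|W - 1| = |tanh (u / 2)| < 2 / 3`.
Zeros of `W` escape the hypothesis (`Complex.log 0 = 0`), but they are isolated, so the bound
extends to the whole disk by continuity, and Schwarz's lemma gives `|G| ≤ 2 / 3`. Along each ray,
`s ^ (α₁ / α₂)` is an integrating factor for `G`, whence `|p'| ≤ 2 / (3 α₁) < 1 / 2` because
`α₁ > e tan (1 / 2) > 4 / 3`. Thus `|p - 1| ≤ 1 / 2` and `|Log p| ≤ 3 / 4`.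
-/

open Complex Metric Set Topology

lemma norm_exp_sub_one_div_exp_add_one_lt {u : ℂ} (hu : ‖u‖ < 1) :
    ‖(exp u - 1) / (exp u + 1)‖ < 2 / 3 := by
  set x := u.re
  set y := u.im
  set E := Real.exp x
  have hxy : x ^ 2 + y ^ 2 < 1 := by
    have h := Complex.sq_norm u
    rw [Complex.normSq_apply] at h
    nlinarith [norm_nonneg u]
  have hx : |x| ≤ 1 := (sq_le_one_iff_abs_le_one x).mp (by nlinarith)
  have hE : 0 < E := Real.exp_pos x
  -- `cosh x ≤ 1 + x ^ 2`
  have hcosh : E ^ 2 + 1 ≤ E * (2 + 2 * x ^ 2) := by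
    have hup := (abs_le.mp (Real.abs_exp_sub_one_sub_id_le hx)).2
    have hdown := (abs_le.mp (Real.abs_exp_sub_one_sub_id_le (x := -x) (by rwa [abs_neg]))).2
    have hinv : E * Real.exp (-x) = 1 := by rw [← Real.exp_add, add_neg_cancel, Real.exp_zero]
    nlinarith
  have hcos : 1 - y ^ 2 / 2 ≤ Real.cos y := Real.one_sub_sq_div_two_le_cos
  have hnorm (s : ℝ) : ‖exp u + s‖ ^ 2 = E ^ 2 + 2 * s * E * Real.cos y + s ^ 2 := by
    rw [Complex.sq_norm, Complex.normSq_apply]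
    simp only [add_re, add_im, exp_re, exp_im, ofReal_re, ofReal_im, add_zero]
    nlinarith [Real.sin_sq_add_cos_sq y]
  have hsq : (3 * ‖exp u - 1‖) ^ 2 < (2 * ‖exp u + 1‖) ^ 2 := by
    have h₁ := hnorm 1
    have hm := hnorm (-1)
    push_cast at h₁ hm
    rw [← sub_eq_add_neg] at hm
    nlinarith
  have hlt := lt_of_pow_lt_pow_left₀ 2 (by positivity) hsq
  rw [norm_div, div_lt_iff₀ (by linarith [norm_nonneg (exp u - 1)])]
  linarith

lemma norm_sub_one_lt_of_norm_log_div_lt {w : ℂ} (hw₀ : w ≠ 0) (hw₂ : w ≠ 2)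
    (h : ‖log (w / (2 - w))‖ < 1) : ‖w - 1‖ < 2 / 3 := by
  have h2w : 2 - w ≠ 0 := sub_ne_zero.mpr hw₂.symm
  have hexp : exp (log (w / (2 - w))) = w / (2 - w) := exp_log (div_ne_zero hw₀ h2w)
  convert norm_exp_sub_one_div_exp_add_one_lt h using 2
  rw [hexp]
  field_simp
  ring

theorem AnalyticOnNhd.forall_mem_of_forall_ne_zero {E X : Type*} [NormedAddCommGroup E]
    [NormedSpace ℂ E] [TopologicalSpace X] {f : ℂ → E} {g : ℂ → X} {U : Set ℂ} {S : Set X}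
    {z₀ : ℂ} (hf : AnalyticOnNhd ℂ f U) (hU : IsPreconnected U) (hUo : IsOpen U)
    (hz₀ : z₀ ∈ U) (hfz₀ : f z₀ ≠ 0) (hg : ContinuousOn g U) (hS : IsClosed S)
    (h : ∀ z ∈ U, f z ≠ 0 → g z ∈ S) : ∀ z ∈ U, g z ∈ S := by
  intro z hz
  rcases (hf z hz).eventually_eq_zero_or_eventually_ne_zero with hzero | hne
  · exact absurd (hf.eqOn_zero_of_preconnected_of_eventuallyEq_zero hU hz hzero hz₀) hfz₀
  · have hU' : ∀ᶠ w in 𝓝[≠] z, w ∈ U := eventually_nhdsWithin_of_eventually_nhds (hUo.mem_nhds hz)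
    exact hS.mem_of_tendsto ((hg.continuousAt (hUo.mem_nhds hz)).tendsto.mono_left
      nhdsWithin_le_nhds) ((hne.and hU').mono fun w hw => h w hw.2 hw.1)

lemma norm_le_div_of_norm_mul_le {G : ℂ → ℂ} {R r : ℝ} (hG : DifferentiableOn ℂ G (ball 0 R))
    (h : ∀ z ∈ ball (0 : ℂ) R, ‖z * G z‖ ≤ r) {z : ℂ} (hz : z ∈ ball (0 : ℂ) R) :
    ‖G z‖ ≤ r / R := by
  have hdslope : dslope (fun z => z * G z) 0 z = G z := by
    rcases eq_or_ne z 0 with rfl | hz₀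
    · rw [dslope_same]
      have hGd := (hG.differentiableAt (isOpen_ball.mem_nhds hz)).hasDerivAt
      simpa using ((hasDerivAt_id' (0 : ℂ)).fun_mul hGd).deriv
    · simpa using dslope_sub_smul_of_ne G hz₀
  rw [← hdslope]
  refine Complex.norm_dslope_le_div_of_mapsTo_ball ?_ (fun w hw => ?_) hz
  · exact differentiableOn_id.mul hG
  · simpa using h w hw

lemma norm_le_div_of_norm_add_mul_deriv_le {h : ℂ → ℂ} {R a b M : ℝ} (hb : 0 < b) (hba : b ≤ a)
    (hh : DifferentiableOn ℂ h (ball 0 R))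
    (hM : ∀ ζ ∈ ball (0 : ℂ) R, ‖a * h ζ + b * ζ * deriv h ζ‖ ≤ M)
    {z : ℂ} (hz : z ∈ ball (0 : ℂ) R) : ‖h z‖ ≤ M / a := by
  set κ := a / b with hκ
  have hκ₁ : 1 ≤ κ := (one_le_div hb).mpr hba
  have hseg : ∀ s ∈ Icc (0 : ℝ) 1, (s : ℂ) * z ∈ ball (0 : ℂ) R := fun s hs => by
    simpa [Complex.real_smul] using
      (convex_ball (0 : ℂ) R).smul_mem_of_zero_mem (mem_ball_self (pos_of_mem_ball hz)) hz hs
  have hφ : ∀ s ∈ Icc (0 : ℝ) 1, HasDerivAt (fun t : ℝ => ((t ^ κ : ℝ) : ℂ) * h (t * z))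
      (((s ^ (κ - 1) / b : ℝ) : ℂ) * (a * h (s * z) + b * (s * z) * deriv h (s * z))) s := by
    intro s hs
    have hlin : HasDerivAt (fun t : ℝ => (t : ℂ) * z) z s := by
      simpa using (hasDerivAt_id s).ofReal_comp.mul_const z
    have hhs := (hh.differentiableAt (isOpen_ball.mem_nhds (hseg s hs))).hasDerivAt.comp s hlin
    refine ((Real.hasDerivAt_rpow_const (Or.inr hκ₁)).ofReal_comp.mul hhs).congr_deriv ?_
    have hpow : s ^ κ = s ^ (κ - 1) * s := by
      conv_lhs => rw [← sub_add_cancel κ 1]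
      rw [Real.rpow_add' hs.1 (by linarith), Real.rpow_one]
    have hb' : (b : ℂ) ≠ 0 := mod_cast hb.ne'
    have hκ' : (κ : ℂ) = a / b := by rw [hκ]; push_cast; rfl
    rw [Function.comp_apply, hpow]
    push_cast
    rw [hκ']
    field_simp
  have hbound : ∀ s ∈ Ico (0 : ℝ) 1,
      ‖((s ^ (κ - 1) / b : ℝ) : ℂ) * (a * h (s * z) + b * (s * z) * deriv h (s * z))‖
        ≤ M / a * (κ * s ^ (κ - 1)) := by
    intro s hs
    have hs' : 0 ≤ s ^ (κ - 1) / b := by have := hs.1; positivity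
    rw [norm_mul, Complex.norm_real, Real.norm_of_nonneg hs']
    calc s ^ (κ - 1) / b * ‖a * h (s * z) + b * (s * z) * deriv h (s * z)‖
        ≤ s ^ (κ - 1) / b * M := by gcongr; exact hM _ (hseg s (Ico_subset_Icc_self hs))
      _ = M / a * (κ * s ^ (κ - 1)) := by
        rw [hκ]; field_simp [(hb.trans_le hba).ne']
  have := image_norm_le_of_norm_deriv_right_le_deriv_boundary
    (fun s hs => (hφ s hs).continuousAt.continuousWithinAt)
    (fun s hs => (hφ s (Ico_subset_Icc_self hs)).hasDerivWithinAt)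
    (by simp [Real.zero_rpow (by positivity : κ ≠ 0)])
    (fun s => (Real.hasDerivAt_rpow_const (Or.inr hκ₁)).const_mul (M / a)) hbound
    (right_mem_Icc.mpr zero_le_one)
  simpa using this

lemma norm_log_lt_one_of_norm_deriv_le {p : ℂ → ℂ} {C : ℝ}
    (hp : DifferentiableOn ℂ p (ball 0 1)) (hp0 : p 0 = 1) (hC : C ≤ 1 / 2)
    (hp' : ∀ z ∈ ball (0 : ℂ) 1, ‖deriv p z‖ ≤ C) {z : ℂ} (hz : z ∈ ball (0 : ℂ) 1) :
    ‖log (p z)‖ < 1 := by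
  have hpz : ‖p z - 1‖ ≤ 1 / 2 := by
    have hmvt := Convex.norm_image_sub_le_of_norm_deriv_le
      (fun w hw => hp.differentiableAt (isOpen_ball.mem_nhds hw)) hp' (convex_ball 0 1)
      (mem_ball_self one_pos) hz
    rw [hp0, sub_zero] at hmvt
    have hz1 : ‖z‖ ≤ 1 := (mem_ball_zero_iff.mp hz).le
    nlinarith [norm_nonneg z, (norm_nonneg _).trans (hp' 0 (mem_ball_self one_pos))]
  calc ‖log (p z)‖ = ‖log (1 + (p z - 1))‖ := by rw [add_sub_cancel]
    _ ≤ 3 / 2 * ‖p z - 1‖ := norm_log_one_add_half_le_self hpz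
    _ < 1 := by linarith

lemma four_thirds_lt_exp_one_mul_tan_half : 4 / 3 < Real.exp 1 * Real.tan (1 / 2) := by
  have htan : 1 / 2 < Real.tan (1 / 2) :=
    Real.lt_tan (by norm_num) (by linarith [Real.pi_gt_three])
  nlinarith [Real.exp_one_gt_d9]

theorem subordination_sigmoid_general (α₁ α₂ : ℝ) (h₂ : 0 < α₂)
    (hcond : α₁ - α₂ ≥ Real.exp 1 * Real.tan (1/2))
    (p : ℂ → ℂ) (hp : DifferentiableOn ℂ p (Metric.ball (0:ℂ) 1)) (hp0 : p 0 = 1)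
    (hne : ∀ z ∈ Metric.ball (0:ℂ) 1,
      1 + α₁ * z * deriv p z + α₂ * z^2 * deriv (deriv p) z ≠ 2)
    (hsub : ∀ z ∈ Metric.ball (0:ℂ) 1,
      ‖Complex.log ((1 + α₁ * z * deriv p z + α₂ * z^2 * deriv (deriv p) z) /
        (2 - (1 + α₁ * z * deriv p z + α₂ * z^2 * deriv (deriv p) z)))‖ < 1) :
    ∀ z ∈ Metric.ball (0:ℂ) 1, ‖Complex.log (p z)‖ < 1 := by
  have hα : α₂ + 4 / 3 < α₁ := by linarith [four_thirds_lt_exp_one_mul_tan_half]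
  set G : ℂ → ℂ := fun z => α₁ * deriv p z + α₂ * z * deriv (deriv p) z with hG
  have hW (z : ℂ) : 1 + α₁ * z * deriv p z + α₂ * z ^ 2 * deriv (deriv p) z = 1 + z * G z := by
    ring
  have hp₁ : AnalyticOnNhd ℂ (deriv p) (ball 0 1) := (hp.analyticOnNhd isOpen_ball).deriv
  have hGa : AnalyticOnNhd ℂ G (ball 0 1) :=
    (analyticOnNhd_const.mul hp₁).add ((analyticOnNhd_const.mul analyticOnNhd_id).mul hp₁.deriv)
  have hWa : AnalyticOnNhd ℂ (fun z => 1 + z * G z) (ball 0 1) :=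
    analyticOnNhd_const.add (analyticOnNhd_id.mul hGa)
  have hzG : ∀ z ∈ ball (0 : ℂ) 1, z * G z ∈ closedBall 0 (2 / 3) :=
    hWa.forall_mem_of_forall_ne_zero (g := fun z => z * G z)
      (convex_ball 0 1).isPreconnected isOpen_ball (mem_ball_self one_pos) (by simp)
      (continuousOn_id.mul hGa.continuousOn) isClosed_closedBall fun z hz hz₀ => by
        simpa using (norm_sub_one_lt_of_norm_log_div_lt hz₀ (hW z ▸ hne z hz)
          (hW z ▸ hsub z hz)).le
  have hGb : ∀ z ∈ ball (0 : ℂ) 1, ‖G z‖ ≤ 2 / 3 := fun z hz => by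
    simpa using norm_le_div_of_norm_mul_le hGa.differentiableOn
      (fun w hw => by simpa using hzG w hw) hz
  have hp₁b : ∀ z ∈ ball (0 : ℂ) 1, ‖deriv p z‖ ≤ 2 / 3 / α₁ := fun z hz =>
    norm_le_div_of_norm_add_mul_deriv_le h₂ (by linarith) hp₁.differentiableOn
      (fun ζ hζ => by simpa [hG, mul_assoc] using hGb ζ hζ) hz
  exact fun z hz => norm_log_lt_one_of_norm_deriv_le hp hp0
    (by rw [div_le_iff₀ (by linarith)]; linarith) hp₁b hz

theorem subordination_sigmoid (α₁ α₂ : ℝ) (h₁ : 0 < α₁) (h₂ : 0 < α₂)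
    (hcond : α₁ - α₂ ≥ Real.exp 1 * Real.tan (1/2))
    (p : ℂ → ℂ) (hp : DifferentiableOn ℂ p (Metric.ball (0:ℂ) 1)) (hp0 : p 0 = 1)
    (hne : ∀ z ∈ Metric.ball (0:ℂ) 1,
      1 + α₁ * z * deriv p z + α₂ * z^2 * deriv (deriv p) z ≠ 2)
    (hsub : ∀ z ∈ Metric.ball (0:ℂ) 1,
      ‖Complex.log ((1 + α₁ * z * deriv p z + α₂ * z^2 * deriv (deriv p) z) /
        (2 - (1 + α₁ * z * deriv p z + α₂ * z^2 * deriv (deriv p) z)))‖ < 1) :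
    ∀ z ∈ Metric.ball (0:ℂ) 1, ‖Complex.log (p z)‖ < 1 :=
  subordination_sigmoid_general α₁ α₂ h₂ hcond p hp hp0 hne hsub
end

section
/- Let α₁, α₂ > 0 be real numbers with α₁ − α₂ ≥ e·sinh(1). Let p : ℂ → ℂ be analytic on the open unit disk 𝔻 with p(0) = 1, and suppose there exists an analytic function ω : 𝔻 → ℂ with ω(0) = 0 and |ω(z)| < 1 for all z ∈ 𝔻 such that 1 + α₁·z·p'(z) + α₂·z²·p''(z) = 1 + sin(ω(z)) for all z ∈ 𝔻. Then for every z ∈ 𝔻, |Log(p(z))| < 1. -/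
/-!
By the Schwarz lemma and `‖sin w‖ ≤ sinh 1 * ‖w‖` on the closed unit disk, `q = p'` satisfies
`‖α₁ w q(w) + α₂ w² q'(w)‖ ≤ sinh 1 * ‖w‖`. Along a ray, `ψ(s) = s q(s^(α₂/α₁) z)` has derivative
`(α₁ w q(w) + α₂ w² q'(w)) / (α₁ w)` at `w = s^(α₂/α₁) z`, so the mean value inequality gives
`‖p'‖ ≤ sinh 1 / α₁` on the disk. Hence `‖p - 1‖ ≤ sinh 1 / α₁ ≤ 1 / e`, and
`‖Log p‖ ≤ 3/2 ‖p - 1‖ ≤ 3 / (2e) < 1`.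
-/

open Metric Set Filter Topology

theorem Complex.norm_sin_le_sinh_one_mul {w : ℂ} (hw : ‖w‖ ≤ 1) :
    ‖Complex.sin w‖ ≤ Real.sinh 1 * ‖w‖ := by
  rw [mul_comm]
  refine (Complex.hasSum_sin w).norm_le_of_bounded ((Real.hasSum_sinh 1).mul_left ‖w‖) fun n => ?_
  rw [norm_div, norm_mul, norm_pow, norm_neg, norm_one, one_pow, one_mul, norm_pow,
    Complex.norm_natCast, one_pow, mul_one_div]
  gcongr
  exact pow_le_of_le_one (norm_nonneg _) hw (by omega)

lemma ofReal_mul_mem_ball {R t : ℝ} {z : ℂ} (hz : z ∈ ball (0 : ℂ) R) (ht₀ : 0 ≤ t)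
    (ht₁ : t ≤ 1) : (t : ℂ) * z ∈ ball (0 : ℂ) R := by
  rw [mem_ball_zero_iff, norm_mul, Complex.norm_of_nonneg ht₀]
  exact (mul_le_of_le_one_left (norm_nonneg z) ht₁).trans_lt (mem_ball_zero_iff.mp hz)

theorem norm_image_sub_le_of_norm_deriv_le_Ioc_01 {E : Type*} [NormedAddCommGroup E]
    [NormedSpace ℝ E] {f f' : ℝ → E} {C : ℝ} (hf₀ : ContinuousWithinAt f (Ioi 0) 0)
    (hf : ∀ s ∈ Ioc (0 : ℝ) 1, HasDerivAt f (f' s) s) (bound : ∀ s ∈ Ioc (0 : ℝ) 1, ‖f' s‖ ≤ C) :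
    ‖f 1 - f 0‖ ≤ C := by
  have hstep : ∀ ε ∈ Ioo (0 : ℝ) 1, ‖f 1 - f ε‖ ≤ C * ‖1 - ε‖ := fun ε hε =>
    (convex_Ioc 0 1).norm_image_sub_le_of_norm_hasDerivWithin_le
      (fun s hs => (hf s hs).hasDerivWithinAt) bound ⟨hε.1, hε.2.le⟩ ⟨one_pos, le_rfl⟩
  have hlim : Tendsto (fun ε => ‖f 1 - f ε‖) (𝓝[>] 0) (𝓝 ‖f 1 - f 0‖) :=
    (tendsto_const_nhds.sub hf₀.tendsto).norm
  have hlimC : Tendsto (fun ε : ℝ => C * ‖1 - ε‖) (𝓝[>] 0) (𝓝 C) := by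
    have : Continuous fun ε : ℝ => C * ‖1 - ε‖ := by fun_prop
    simpa using (this.tendsto 0).mono_left nhdsWithin_le_nhds
  refine le_of_tendsto_of_tendsto hlim hlimC ?_
  filter_upwards [Ioo_mem_nhdsGT one_pos] with ε hε using hstep ε hε

lemma hasDerivAt_ofReal_mul_comp_rpow_mul {q : ℂ → ℂ} {z : ℂ} {κ s : ℝ} (hs : 0 < s)
    (hq : DifferentiableAt ℂ q (↑(s ^ κ) * z)) :
    HasDerivAt (fun t : ℝ => (t : ℂ) * q (↑(t ^ κ) * z))
      (q (↑(s ^ κ) * z) + κ * (↑(s ^ κ) * z) * deriv q (↑(s ^ κ) * z)) s := by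
  have hpow : HasDerivAt (fun t : ℝ => ((t ^ κ : ℝ) : ℂ)) ((κ * s ^ (κ - 1) : ℝ) : ℂ) s :=
    (Real.hasDerivAt_rpow_const (Or.inl hs.ne')).ofReal_comp
  have hcomp := (hasDerivAt_id s).ofReal_comp.mul (hq.hasDerivAt.comp s (hpow.mul_const z))
  refine hcomp.congr_deriv ?_
  have hs' : (s : ℂ) ≠ 0 := Complex.ofReal_ne_zero.mpr hs.ne'
  simp only [Function.comp_apply, id, Real.rpow_sub_one hs.ne', Complex.ofReal_one,
    Complex.ofReal_mul, Complex.ofReal_div]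
  field_simp

theorem norm_le_div_of_norm_euler_le_of_ne_zero {R a b c : ℝ} {q : ℂ → ℂ}
    (hq : DifferentiableOn ℂ q (ball 0 R)) (ha : 0 < a) (hb : 0 ≤ b)
    (hbound : ∀ w ∈ ball (0 : ℂ) R, ‖a * w * q w + b * w ^ 2 * deriv q w‖ ≤ c * ‖w‖)
    {z : ℂ} (hz : z ∈ ball (0 : ℂ) R) (hz₀ : z ≠ 0) : ‖q z‖ ≤ c / a := by
  set κ := b / a with hκ
  have hmem : ∀ s ∈ Icc (0 : ℝ) 1, (↑(s ^ κ) * z : ℂ) ∈ ball (0 : ℂ) R := fun s hs =>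
    ofReal_mul_mem_ball hz (Real.rpow_nonneg hs.1 κ)
      (Real.rpow_le_one hs.1 hs.2 (div_nonneg hb ha.le))
  have hdiff : ∀ s ∈ Icc (0 : ℝ) 1, DifferentiableAt ℂ q (↑(s ^ κ) * z) := fun s hs =>
    hq.differentiableAt (isOpen_ball.mem_nhds (hmem s hs))
  have hcont : ContinuousWithinAt (fun t : ℝ => (t : ℂ) * q (↑(t ^ κ) * z)) (Ioi 0) 0 := by
    have hpow : Continuous fun t : ℝ => (↑(t ^ κ) * z : ℂ) := by
      have := Real.continuous_rpow_const (div_nonneg hb ha.le) (q := κ)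
      fun_prop
    have hq₀ := (hdiff 0 ⟨le_rfl, zero_le_one⟩).continuousAt
    exact (Complex.continuous_ofReal.continuousAt.mul
      (hq₀.comp_of_eq hpow.continuousAt rfl)).continuousWithinAt
  have hderiv : ∀ s ∈ Ioc (0 : ℝ) 1,
      ‖q (↑(s ^ κ) * z) + κ * (↑(s ^ κ) * z) * deriv q (↑(s ^ κ) * z)‖ ≤ c / a := by
    intro s hs
    set w : ℂ := ↑(s ^ κ) * z
    have hw : 0 < ‖w‖ := norm_pos_iff.mpr
      (mul_ne_zero (Complex.ofReal_ne_zero.mpr (Real.rpow_pos_of_pos hs.1 κ).ne') hz₀)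
    have hid : a * w * (q w + κ * w * deriv q w) = a * w * q w + b * w ^ 2 * deriv q w := by
      have ha' : (a : ℂ) ≠ 0 := Complex.ofReal_ne_zero.mpr ha.ne'
      simp only [hκ, Complex.ofReal_div]
      field_simp
    have := hbound w (hmem s (Ioc_subset_Icc_self hs))
    rw [← hid, norm_mul, norm_mul, Complex.norm_of_nonneg ha.le] at this
    rw [le_div_iff₀ ha]
    nlinarith
  simpa using norm_image_sub_le_of_norm_deriv_le_Ioc_01 hcont
    (fun s hs => hasDerivAt_ofReal_mul_comp_rpow_mul hs.1 (hdiff s (Ioc_subset_Icc_self hs)))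
    hderiv

theorem norm_le_div_of_norm_euler_le {R a b c : ℝ} {q : ℂ → ℂ}
    (hq : DifferentiableOn ℂ q (ball 0 R)) (ha : 0 < a) (hb : 0 ≤ b)
    (hbound : ∀ w ∈ ball (0 : ℂ) R, ‖a * w * q w + b * w ^ 2 * deriv q w‖ ≤ c * ‖w‖)
    {z : ℂ} (hz : z ∈ ball (0 : ℂ) R) : ‖q z‖ ≤ c / a := by
  obtain rfl | hz₀ := eq_or_ne z 0
  · have hq₀ : Tendsto q (𝓝[≠] 0) (𝓝 (q 0)) :=
      (hq.continuousOn.continuousAt (isOpen_ball.mem_nhds hz)).tendsto.mono_left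
        nhdsWithin_le_nhds
    refine le_of_tendsto hq₀.norm ?_
    filter_upwards [self_mem_nhdsWithin, nhdsWithin_le_nhds (isOpen_ball.mem_nhds hz)]
      with w hw₀ hw using norm_le_div_of_norm_euler_le_of_ne_zero hq ha hb hbound hw hw₀
  · exact norm_le_div_of_norm_euler_le_of_ne_zero hq ha hb hbound hz hz₀

theorem subordination_sine (α₁ α₂ : ℝ) (h₁ : 0 < α₁) (h₂ : 0 < α₂)
    (hcond : α₁ - α₂ ≥ Real.exp 1 * Real.sinh 1)
    (p : ℂ → ℂ) (hp : DifferentiableOn ℂ p (Metric.ball (0:ℂ) 1)) (hp0 : p 0 = 1)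
    (hsub : ∃ ω : ℂ → ℂ, DifferentiableOn ℂ ω (Metric.ball (0:ℂ) 1) ∧ ω 0 = 0 ∧
      (∀ z ∈ Metric.ball (0:ℂ) 1, ‖ω z‖ < 1) ∧
      ∀ z ∈ Metric.ball (0:ℂ) 1,
        1 + α₁ * z * deriv p z + α₂ * z^2 * deriv (deriv p) z = 1 + Complex.sin (ω z)) :
    ∀ z ∈ Metric.ball (0:ℂ) 1, ‖Complex.log (p z)‖ < 1 := by
  obtain ⟨ω, hω, hω₀, hω_lt, hode⟩ := hsub
  have heuler : ∀ w ∈ ball (0 : ℂ) 1,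
      ‖α₁ * w * deriv p w + α₂ * w ^ 2 * deriv (deriv p) w‖ ≤ Real.sinh 1 * ‖w‖ := by
    intro w hw
    have hschwarz : ‖ω w‖ ≤ ‖w‖ := Complex.norm_le_norm_of_mapsTo_ball hω
      (fun x hx => mem_closedBall_zero_iff.mpr (hω_lt x hx).le) hω₀ (mem_ball_zero_iff.mp hw)
    have hsin : α₁ * w * deriv p w + α₂ * w ^ 2 * deriv (deriv p) w = Complex.sin (ω w) := by
      linear_combination hode w hw
    rw [hsin]
    calc ‖Complex.sin (ω w)‖ ≤ Real.sinh 1 * ‖ω w‖ :=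
          Complex.norm_sin_le_sinh_one_mul (hω_lt w hw).le
      _ ≤ Real.sinh 1 * ‖w‖ := by gcongr
  intro z hz
  have hlip : ‖p z - 1‖ ≤ Real.sinh 1 / α₁ := by
    have := (convex_ball (0 : ℂ) 1).norm_image_sub_le_of_norm_deriv_le
      (fun w hw => hp.differentiableAt (isOpen_ball.mem_nhds hw))
      (fun w hw => norm_le_div_of_norm_euler_le (hp.deriv isOpen_ball) h₁ h₂.le heuler hw)
      (mem_ball_self one_pos) hz
    rw [hp0, sub_zero] at this
    exact this.trans (mul_le_of_le_one_right (by positivity) (mem_ball_zero_iff.mp hz).le)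
  have he : 2 < Real.exp 1 := lt_trans (by norm_num) Real.exp_one_gt_d9
  have hsmall : ‖p z - 1‖ ≤ (Real.exp 1)⁻¹ := by
    refine hlip.trans ?_
    rw [div_le_iff₀ h₁, ← div_eq_inv_mul, le_div_iff₀ (by positivity)]
    linarith
  calc ‖Complex.log (p z)‖ = ‖Complex.log (1 + (p z - 1))‖ := by rw [add_sub_cancel]
    _ ≤ 3 / 2 * ‖p z - 1‖ :=
        Complex.norm_log_one_add_half_le_self (hsmall.trans (by rw [inv_le_comm₀] <;> linarith))
    _ ≤ 3 / 2 * (Real.exp 1)⁻¹ := by gcongr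
    _ < 1 := by rw [← div_eq_mul_inv, div_lt_one (by positivity)]; linarith
end

section
/- Let α₁, α₂ > 0 be real numbers with α₁ − α₂ ≥ e². Let p : ℂ → ℂ be analytic on the open unit disk 𝔻 with p(0) = 1, and suppose there exists an analytic function ω : 𝔻 → ℂ with ω(0) = 0 and |ω(z)| < 1 for all z ∈ 𝔻 such that 1 + α₁·z·p'(z) + α₂·z²·p''(z) = 1 + ω(z)·e^{ω(z)} for all z ∈ 𝔻. Then for every z ∈ 𝔻, |Log(p(z))| < 1. -/
/-!
By the Schwarz lemma `‖ω w‖ ≤ ‖w‖`, so `‖α₁ w p' + α₂ w² p''‖ = ‖ω e^ω‖ ≤ ‖w‖ e^‖w‖`.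
For `q w = w p' w` the left-hand side is `α₂ (k q + w q')` with `k = α₁ / α₂ - 1 ≥ 0`, and
`t^(k-1) (k q + w q')(t z) = d/dt (t^k q (t z))`. Integrating over `t ∈ [0, 1]` against the
bound `t^k ‖z‖ e^‖z‖` gives `‖z p' z‖ ≤ ‖z‖ e^‖z‖ / α₁`. Integrating `p'` along the same ray
gives `‖p z - 1‖ ≤ e / α₁ < 1/2`, and then `‖Log p z‖ ≤ 3/2 ‖p z - 1‖ < 1`.
-/

open Metric Set MeasureTheory intervalIntegral

theorem norm_sub_le_of_norm_deriv_le_rpow {F : Type*} [NormedAddCommGroup F] [NormedSpace ℝ F]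
    [CompleteSpace F] {g g' : ℝ → F} {a C : ℝ} (ha : 0 ≤ a) (hg : ContinuousOn g (Icc 0 1))
    (hg' : ∀ s ∈ Ioo (0 : ℝ) 1, HasDerivAt g (g' s) s) (hg'_cont : ContinuousOn g' (Ioc 0 1))
    (hbound : ∀ s ∈ Ioc (0 : ℝ) 1, ‖g' s‖ ≤ C * s ^ a) :
    ‖g 1 - g 0‖ ≤ C / (a + 1) := by
  have hB : IntervalIntegrable (fun s : ℝ => C * s ^ a) volume 0 1 :=
    (continuous_const.mul (Real.continuous_rpow_const ha)).intervalIntegrable 0 1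
  have hg'_int : IntervalIntegrable g' volume 0 1 := by
    refine hB.mono_fun' ?_ ?_ <;> rw [uIoc_of_le zero_le_one]
    · exact hg'_cont.aestronglyMeasurable measurableSet_Ioc
    · exact (ae_restrict_mem measurableSet_Ioc).mono hbound
  calc ‖g 1 - g 0‖ = ‖∫ s in (0 : ℝ)..1, g' s‖ := by
        rw [integral_eq_sub_of_hasDerivAt_of_le zero_le_one hg hg' hg'_int]
    _ ≤ ∫ s in (0 : ℝ)..1, C * s ^ a :=
        norm_integral_le_of_norm_le zero_le_one (ae_of_all _ hbound) hB
    _ = C / (a + 1) := by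
        rw [intervalIntegral.integral_const_mul, integral_rpow (Or.inl (by linarith)),
          Real.one_rpow, Real.zero_rpow (by linarith)]
        ring

section RadialIntegration

variable {E : Type*} [NormedAddCommGroup E] [NormedSpace ℂ E] {f : ℂ → E} {R a M : ℝ} {z : ℂ}

theorem hasDerivAt_rpow_smul_comp_smul {s : ℝ} (hs : 0 < s) (hf : DifferentiableAt ℂ f (s • z)) :
    HasDerivAt (fun t : ℝ => t ^ a • f (t • z))
      (s ^ (a - 1) • (a • f (s • z) + (s • z) • deriv f (s • z))) s := by
  have hray : HasDerivAt (fun t : ℝ => f (t • z)) (z • deriv f (s • z)) s := by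
    simpa [Function.comp_def] using hf.hasDerivAt.scomp s ((hasDerivAt_id s).smul_const z)
  refine ((Real.hasDerivAt_rpow_const (p := a) (Or.inl hs.ne')).smul hray).congr_deriv ?_
  have hs_pow : s ^ a = s ^ (a - 1) * s := by
    rw [Real.rpow_sub_one hs.ne', div_mul_cancel₀ _ hs.ne']
  rw [smul_assoc, hs_pow]
  module

theorem norm_sub_le_of_norm_add_smul_deriv_le [CompleteSpace E] (ha : 0 ≤ a)
    (hf : DifferentiableOn ℂ f (ball 0 R)) (hz : z ∈ ball (0 : ℂ) R)
    (hM : ∀ w ∈ ball (0 : ℂ) R, ‖w‖ ≤ ‖z‖ → ‖a • f w + w • deriv f w‖ ≤ M * ‖w‖) :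
    ‖f z - f 0‖ ≤ M * ‖z‖ / (a + 1) := by
  have h0 : (0 : ℂ) ∈ ball (0 : ℂ) R := mem_ball_self (pos_of_mem_ball hz)
  have hray : MapsTo (fun s : ℝ => s • z) (Icc 0 1) (ball 0 R) := fun s hs =>
    (convex_ball 0 R).smul_mem_of_zero_mem h0 hz hs
  have hends : (1 : ℝ) ^ a • f ((1 : ℝ) • z) - (0 : ℝ) ^ a • f ((0 : ℝ) • z) = f z - f 0 := by
    rcases ha.eq_or_lt with rfl | ha
    · simp
    · have hf0 : f 0 = 0 := by simpa [ha.ne'] using hM 0 h0 (by simp)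
      simp [Real.zero_rpow ha.ne', hf0]
  rw [← hends]
  refine norm_sub_le_of_norm_deriv_le_rpow (g := fun t : ℝ => t ^ a • f (t • z)) ha
    ((Real.continuous_rpow_const ha).continuousOn.smul (hf.continuousOn.comp (by fun_prop) hray))
    (fun s hs => hasDerivAt_rpow_smul_comp_smul hs.1
      (hf.differentiableAt (isOpen_ball.mem_nhds (hray (Ioo_subset_Icc_self hs))))) ?_ ?_
  · have hray' : MapsTo (fun s : ℝ => s • z) (Ioc 0 1) (ball 0 R) :=
      hray.mono_left Ioc_subset_Icc_self
    have hf' : ContinuousOn (deriv f) (ball 0 R) :=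
      (hf.analyticOnNhd isOpen_ball).deriv.continuousOn
    exact (continuousOn_id.rpow_const fun s hs => Or.inl hs.1.ne').smul
      ((continuousOn_const.smul (hf.continuousOn.comp (by fun_prop) hray')).add
        ((by fun_prop : Continuous fun s : ℝ => s • z).continuousOn.smul
          (hf'.comp (by fun_prop) hray')))
  · intro s hs
    have hnorm : ‖s • z‖ = s * ‖z‖ := by rw [norm_smul, Real.norm_of_nonneg hs.1.le]
    have hs_pow : s ^ a = s ^ (a - 1) * s := by
      rw [Real.rpow_sub_one hs.1.ne', div_mul_cancel₀ _ hs.1.ne']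
    calc ‖s ^ (a - 1) • (a • f (s • z) + (s • z) • deriv f (s • z))‖
        = s ^ (a - 1) * ‖a • f (s • z) + (s • z) • deriv f (s • z)‖ := by
          rw [norm_smul, Real.norm_of_nonneg (Real.rpow_nonneg hs.1.le _)]
      _ ≤ s ^ (a - 1) * (M * (s * ‖z‖)) := by
          refine mul_le_mul_of_nonneg_left ?_ (Real.rpow_nonneg hs.1.le _)
          rw [← hnorm]
          exact hM _ (hray (Ioc_subset_Icc_self hs))
            (by rw [hnorm]; exact mul_le_of_le_one_left (norm_nonneg z) hs.2)
      _ = M * ‖z‖ * s ^ a := by rw [hs_pow]; ring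

end RadialIntegration

theorem norm_mul_deriv_le_of_norm_second_order_le {p : ℂ → ℂ} {α₁ α₂ R M : ℝ} {z : ℂ} (h₂ : 0 < α₂)
    (h₂₁ : α₂ ≤ α₁) (hp : DifferentiableOn ℂ p (ball 0 R)) (hz : z ∈ ball (0 : ℂ) R)
    (hM : ∀ w ∈ ball (0 : ℂ) R, ‖w‖ ≤ ‖z‖ →
      ‖α₁ * w * deriv p w + α₂ * w ^ 2 * deriv (deriv p) w‖ ≤ M * ‖w‖) :
    ‖z * deriv p z‖ ≤ M * ‖z‖ / α₁ := by
  have hp' : DifferentiableOn ℂ (deriv p) (ball 0 R) :=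
    (hp.analyticOnNhd isOpen_ball).deriv.differentiableOn
  have hα₂ : (α₂ : ℂ) ≠ 0 := by exact_mod_cast h₂.ne'
  have heuler : ∀ w ∈ ball (0 : ℂ) R,
      ((α₁ - α₂) / α₂) • (w * deriv p w) + w • deriv (fun v => v * deriv p v) w =
        (α₁ * w * deriv p w + α₂ * w ^ 2 * deriv (deriv p) w) / α₂ := by
    intro w hw
    have hq' := ((hasDerivAt_id' w).fun_mul
      (hp'.differentiableAt (isOpen_ball.mem_nhds hw)).hasDerivAt).deriv
    rw [hq', Complex.real_smul, smul_eq_mul, one_mul]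
    push_cast
    field_simp
    ring
  have hq := norm_sub_le_of_norm_add_smul_deriv_le (f := fun v => v * deriv p v)
    (a := (α₁ - α₂) / α₂) (M := M / α₂) (div_nonneg (by linarith) h₂.le)
    (differentiableOn_id.fun_mul hp') hz fun w hw hwz => by
      rw [heuler w hw, norm_div, Complex.norm_real, Real.norm_of_nonneg h₂.le, div_le_iff₀ h₂,
        div_mul_eq_mul_div, div_mul_cancel₀ _ h₂.ne']
      exact hM w hw hwz
  have hconst : M / α₂ * ‖z‖ / ((α₁ - α₂) / α₂ + 1) = M * ‖z‖ / α₁ := by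
    field_simp
    ring
  simpa [hconst] using hq

theorem norm_mul_exp_le_of_mapsTo_ball {ω : ℂ → ℂ} {w : ℂ} (hω : DifferentiableOn ℂ ω (ball 0 1))
    (hmaps : MapsTo ω (ball 0 1) (closedBall 0 1)) (hω0 : ω 0 = 0) (hw : ‖w‖ < 1) :
    ‖ω w * Complex.exp (ω w)‖ ≤ ‖w‖ * Real.exp ‖w‖ := by
  have hschwarz : ‖ω w‖ ≤ ‖w‖ := Complex.norm_le_norm_of_mapsTo_ball hω hmaps hω0 hw
  rw [norm_mul, Complex.norm_exp]
  exact mul_le_mul hschwarz (Real.exp_le_exp.2 ((Complex.re_le_norm _).trans hschwarz))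
    (Real.exp_pos _).le (norm_nonneg _)

theorem subordination_cardioid_general (α₁ α₂ : ℝ) (h₂ : 0 < α₂)
    (hcond : α₁ - α₂ ≥ (Real.exp 1)^2)
    (p : ℂ → ℂ) (hp : DifferentiableOn ℂ p (Metric.ball (0:ℂ) 1)) (hp0 : p 0 = 1)
    (hsub : ∃ ω : ℂ → ℂ, DifferentiableOn ℂ ω (Metric.ball (0:ℂ) 1) ∧ ω 0 = 0 ∧
      (∀ z ∈ Metric.ball (0:ℂ) 1, ‖ω z‖ < 1) ∧
      ∀ z ∈ Metric.ball (0:ℂ) 1,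
        1 + α₁ * z * deriv p z + α₂ * z^2 * deriv (deriv p) z =
          1 + ω z * Complex.exp (ω z)) :
    ∀ z ∈ Metric.ball (0:ℂ) 1, ‖Complex.log (p z)‖ < 1 := by
  obtain ⟨ω, hω, hω0, hω1, hωp⟩ := hsub
  intro z hz
  have hcardioid : ∀ w ∈ ball (0 : ℂ) 1, ‖w‖ ≤ ‖z‖ →
      ‖α₁ * w * deriv p w + α₂ * w ^ 2 * deriv (deriv p) w‖ ≤ Real.exp ‖z‖ * ‖w‖ := by
    intro w hw hwz
    rw [show (α₁ : ℂ) * w * deriv p w + α₂ * w ^ 2 * deriv (deriv p) w = ω w * Complex.exp (ω w)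
      by linear_combination hωp w hw, mul_comm (Real.exp _)]
    exact (norm_mul_exp_le_of_mapsTo_ball hω (fun v hv => mem_closedBall_zero_iff.2 (hω1 v hv).le)
      hω0 (mem_ball_zero_iff.1 hw)).trans (by gcongr)
  have he : 2 < Real.exp 1 := by linarith [Real.exp_one_gt_d9]
  have hα₁ : 2 * Real.exp 1 < α₁ := by nlinarith
  have hα₁_pos : 0 < α₁ := by linarith [Real.exp_pos 1]
  have hα₂₁ : α₂ ≤ α₁ := by linarith [sq_nonneg (Real.exp 1)]
  have hz1 : ‖z‖ ≤ 1 := (mem_ball_zero_iff.1 hz).le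
  have hq : ∀ w ∈ ball (0 : ℂ) 1, ‖w‖ ≤ ‖z‖ → ‖w * deriv p w‖ ≤ Real.exp ‖z‖ * ‖w‖ / α₁ :=
    fun w hw hwz => norm_mul_deriv_le_of_norm_second_order_le h₂ hα₂₁ hp hw
      fun v hv hvw => hcardioid v hv (hvw.trans hwz)
  have hpz : ‖p z - 1‖ < 1 / 2 :=
    calc ‖p z - 1‖ ≤ Real.exp ‖z‖ * ‖z‖ / α₁ := by
          simpa [hp0, div_mul_eq_mul_div] using
            norm_sub_le_of_norm_add_smul_deriv_le (a := 0) (M := Real.exp ‖z‖ / α₁) le_rfl hp hz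
              fun w hw hwz => by simpa [mul_div_right_comm] using hq w hw hwz
      _ ≤ Real.exp 1 * 1 / α₁ := by gcongr
      _ < 1 / 2 := by rw [mul_one, div_lt_iff₀ hα₁_pos]; linarith
  calc ‖Complex.log (p z)‖ ≤ 3 / 2 * ‖p z - 1‖ := by
        simpa using Complex.norm_log_one_add_half_le_self (z := p z - 1) hpz.le
    _ < 1 := by linarith

theorem subordination_cardioid (α₁ α₂ : ℝ) (h₁ : 0 < α₁) (h₂ : 0 < α₂)
    (hcond : α₁ - α₂ ≥ (Real.exp 1)^2)
    (p : ℂ → ℂ) (hp : DifferentiableOn ℂ p (Metric.ball (0:ℂ) 1)) (hp0 : p 0 = 1)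
    (hsub : ∃ ω : ℂ → ℂ, DifferentiableOn ℂ ω (Metric.ball (0:ℂ) 1) ∧ ω 0 = 0 ∧
      (∀ z ∈ Metric.ball (0:ℂ) 1, ‖ω z‖ < 1) ∧
      ∀ z ∈ Metric.ball (0:ℂ) 1,
        1 + α₁ * z * deriv p z + α₂ * z^2 * deriv (deriv p) z =
          1 + ω z * Complex.exp (ω z)) :
    ∀ z ∈ Metric.ball (0:ℂ) 1, ‖Complex.log (p z)‖ < 1 :=
  subordination_cardioid_general α₁ α₂ h₂ hcond p hp hp0 hsub
end
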